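/- arXiv:2412.16865 — 2 statements merged into one kernel-verified Lean document; each statement's English description precedes it below -/
import Mathlib

section
/- Let p be prime and let H = {(x,y) ∈ (Z/p²Z)² : px = 0 and py = 0} be the non-cyclic Lagrangian of (Z/p²Z)². If A ⊆ (Z/p²Z)² is a tiling complement of H (i.e. (A,H) is a tiling pair) and 0 ∈ A, then A ∩ Z(1̂_A^{sym}) = ∅, i.e. for every a ∈ A, ∑_{a'∈A} e^{2πi⟨a',a⟩_s/p²} ≠ 0. -/
open Complex

abbrev G (n : ℕ) := ZMod n × ZMod n

def symp {n : ℕ} (x y : G n) : ZMod n := x.1 * y.2 - x.2 * y.1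

noncomputable def sF {n : ℕ} (A : Finset (G n)) (ξ : G n) : ℂ :=
  ∑ a ∈ A, Complex.exp (2 * Real.pi * Complex.I * ((symp a ξ).val : ℂ) / (n : ℂ))

/-- The non-cyclic Lagrangian of `(Z/p²Z)²`: elements of order dividing `p`. -/
def Hp (p : ℕ) : AddSubgroup (G (p ^ 2)) where
  carrier := {g | p • g = 0}
  zero_mem' := by simp
  add_mem' := by
    intro a b ha hb
    simp only [Set.mem_setOf_eq, smul_add] at *
    rw [ha, hb, add_zero]
  neg_mem' := by
    intro a ha
    simp only [Set.mem_setOf_eq, smul_neg] at *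
    rw [ha, neg_zero]

def IsTilingPairSub {n : ℕ} (A : Finset (G n)) (H : AddSubgroup (G n)) : Prop :=
  ∀ g : G n, ∃! q : G n × G n, (q.1 ∈ A ∧ q.2 ∈ H) ∧ q.1 + q.2 = g

/-!
For `a ∈ A`, `a ≠ 0`, let `ν j` count the `x ∈ A` with `symp x a = j`. If `sF A a = 0`,
then `∑ ν j X ^ j` vanishes at a primitive `p²`-th root of unity, so it is a multiple of
`Φ_{p²}`; since `Φ_{p²} * (X ^ p - 1) = X ^ p² - 1`, the sequence `ν` is `p`-periodic, and
`ν (j * p) = ν 0 ≥ 2` for all `j < p` (both `0` and `a` count towards `ν 0`). On the other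
hand, reduction mod `p` maps `A` bijectively onto `(ZMod p)²` because `Hp p` is its kernel, and
`a ∉ Hp p`, so the `x ∈ A` with `p ∣ (symp x a).val` correspond to the points of a line: there
are exactly `p = ∑_{j < p} ν (j * p)` of them, a contradiction.
-/

open Polynomial Finset

namespace Polynomial

theorem coeff_add_prime_pow_eq_of_aeval_eq_zero {K : Type*} [Field K] [CharZero K]
    {p k : ℕ} [Fact p.Prime] {ζ : K} (hζ : IsPrimitiveRoot ζ (p ^ (k + 1))) {f : ℚ[X]}
    (hdeg : f.natDegree < p ^ (k + 1)) (hf : aeval ζ f = 0) {n : ℕ}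
    (hn : n + p ^ k < p ^ (k + 1)) :
    f.coeff (n + p ^ k) = f.coeff n := by
  have hp : p.Prime := Fact.out
  obtain ⟨g, rfl⟩ : cyclotomic (p ^ (k + 1)) ℚ ∣ f := by
    rw [cyclotomic_eq_minpoly_rat hζ (pow_pos hp.pos _)]
    exact minpoly.dvd ℚ ζ hf
  have hg : g.natDegree < p ^ k := by
    rcases eq_or_ne g 0 with rfl | hg0
    · simp [hp.pos]
    rw [natDegree_mul (cyclotomic_ne_zero _ _) hg0, natDegree_cyclotomic,
      Nat.totient_prime_pow_succ hp] at hdeg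
    have : p ^ (k + 1) = p ^ k * (p - 1) + p ^ k := by
      rw [pow_succ, Nat.mul_sub_one, Nat.sub_add_cancel (Nat.le_mul_of_pos_right _ hp.pos)]
    omega
  -- Multiplying by `X ^ p ^ k - 1` turns `Φ_{p^(k+1)} * g` into `g * (X ^ p ^ (k + 1) - 1)`,
  -- whose coefficients in degrees `[p ^ k, p ^ (k + 1))` vanish since `deg g < p ^ k`.
  have key : cyclotomic (p ^ (k + 1)) ℚ * g * X ^ p ^ k - cyclotomic (p ^ (k + 1)) ℚ * g =
      g * X ^ p ^ (k + 1) - g := by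
    linear_combination g * cyclotomic_prime_pow_mul_X_pow_sub_one ℚ p k
  have := congrArg (coeff · (n + p ^ k)) key
  rw [coeff_sub, coeff_sub, coeff_mul_X_pow, coeff_mul_X_pow', if_neg hn.not_ge,
    coeff_eq_zero_of_natDegree_lt (hg.trans_le (Nat.le_add_left _ _)), sub_zero] at this
  linear_combination -this

theorem coeff_mul_prime_pow_eq_coeff_zero_of_aeval_eq_zero {K : Type*} [Field K]
    [CharZero K] {p k : ℕ} [Fact p.Prime] {ζ : K} (hζ : IsPrimitiveRoot ζ (p ^ (k + 1)))
    {f : ℚ[X]} (hdeg : f.natDegree < p ^ (k + 1)) (hf : aeval ζ f = 0) {j : ℕ} (hj : j < p) :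
    f.coeff (j * p ^ k) = f.coeff 0 := by
  induction j with
  | zero => rw [zero_mul]
  | succ j ih =>
    have hlt : j * p ^ k + p ^ k < p ^ (k + 1) := by
      rw [← Nat.succ_mul, pow_succ']
      exact Nat.mul_lt_mul_of_pos_right hj (pow_pos (Fact.out : p.Prime).pos k)
    rw [Nat.succ_mul, coeff_add_prime_pow_eq_of_aeval_eq_zero hζ hdeg hf hlt, ih (by omega)]

theorem coeff_sum_X_pow {R ι : Type*} [Semiring R] (s : Finset ι) (e : ι → ℕ) (m : ℕ) :
    (∑ i ∈ s, (X : R[X]) ^ e i).coeff m = #(s.filter (fun i => e i = m)) := by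
  simp [coeff_X_pow, eq_comm]

theorem natDegree_sum_X_pow_le {R ι : Type*} [Semiring R] {s : Finset ι} {e : ι → ℕ}
    {N : ℕ} (he : ∀ i ∈ s, e i ≤ N) : (∑ i ∈ s, (X : R[X]) ^ e i).natDegree ≤ N :=
  natDegree_sum_le_of_forall_le _ _ fun i hi => (natDegree_X_pow_le _).trans (he i hi)

end Polynomial

theorem ZMod.castHom_eq_zero_iff_dvd_val {m n : ℕ} [NeZero n] (h : m ∣ n) (x : ZMod n) :
    ZMod.castHom h (ZMod m) x = 0 ↔ m ∣ x.val := by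
  rw [ZMod.castHom_apply, ZMod.cast_eq_val, ZMod.natCast_eq_zero_iff]

theorem ZMod.nsmul_eq_zero_iff_dvd_val {p : ℕ} [NeZero p] (x : ZMod (p ^ 2)) :
    p • x = 0 ↔ p ∣ x.val := by
  have hsq : ∀ m : ℕ, p ^ 2 ∣ p * m ↔ p ∣ m := fun m => by
    rw [sq, Nat.mul_dvd_mul_iff_left (NeZero.pos p)]
  rw [← ZMod.natCast_zmod_val x, nsmul_eq_mul, ← Nat.cast_mul, ZMod.natCast_eq_zero_iff,
    ZMod.val_natCast_of_lt (ZMod.val_lt x), hsq]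

def reduceMod (p : ℕ) : G (p ^ 2) →+ G p :=
  let r := (ZMod.castHom (dvd_pow_self p two_ne_zero) (ZMod p)).toAddMonoidHom
  r.prodMap r

theorem reduceMod_surjective (p : ℕ) : Function.Surjective (reduceMod p) :=
  Prod.map_surjective.mpr
    ⟨ZMod.castHom_surjective (dvd_pow_self p two_ne_zero),
      ZMod.castHom_surjective (dvd_pow_self p two_ne_zero)⟩

theorem symp_reduceMod (p : ℕ) (x y : G (p ^ 2)) :
    symp (reduceMod p x) (reduceMod p y) =
      ZMod.castHom (dvd_pow_self p two_ne_zero) (ZMod p) (symp x y) := by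
  simp [reduceMod, symp]

theorem ker_reduceMod (p : ℕ) [NeZero p] : (reduceMod p).ker = Hp p := by
  ext g
  change reduceMod p g = 0 ↔ p • g = 0
  simp only [reduceMod, AddMonoidHom.coe_prodMap, Prod.map_fst, Prod.map_snd, Prod.ext_iff,
    Prod.smul_fst, Prod.smul_snd, Prod.fst_zero, Prod.snd_zero, ZMod.nsmul_eq_zero_iff_dvd_val]
  exact and_congr (ZMod.castHom_eq_zero_iff_dvd_val (dvd_pow_self p two_ne_zero) g.1)
    (ZMod.castHom_eq_zero_iff_dvd_val (dvd_pow_self p two_ne_zero) g.2)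

namespace IsTilingPairSub

variable {n : ℕ} {A : Finset (G n)} {H : AddSubgroup (G n)}

theorem eq_of_sub_mem (hA : IsTilingPairSub A H) {a b : G n} (ha : a ∈ A) (hb : b ∈ A)
    (hab : b - a ∈ H) : a = b :=
  (congrArg Prod.fst ((hA b).unique (y₁ := (b, 0)) (y₂ := (a, b - a))
    ⟨⟨hb, H.zero_mem⟩, add_zero b⟩ ⟨⟨ha, hab⟩, add_sub_cancel a b⟩)).symm

theorem exists_sub_mem (hA : IsTilingPairSub A H) (g : G n) : ∃ a ∈ A, g - a ∈ H := by
  obtain ⟨⟨a, h⟩, ⟨⟨ha, hh⟩, rfl⟩, -⟩ := hA g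
  exact ⟨a, ha, by simpa using hh⟩

theorem card_filter_comp {K : Type*} [AddGroup K] [Fintype K] (hA : IsTilingPairSub A H)
    (φ : G n →+ K) (hφ : Function.Surjective φ) (hker : φ.ker = H) (P : K → Prop)
    [DecidablePred P] : #(A.filter (fun x => P (φ x))) = #(univ.filter P) := by
  subst hker
  apply card_nbij φ
  · intro x hx
    simpa using (mem_filter.mp hx).2
  · intro x hx y hy hxy
    exact hA.eq_of_sub_mem (mem_filter.mp hx).1 (mem_filter.mp hy).1
      (by rw [AddMonoidHom.mem_ker, map_sub, hxy, sub_self])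
  · intro v hv
    obtain ⟨g, rfl⟩ := hφ v
    obtain ⟨a, ha, hga⟩ := hA.exists_sub_mem g
    have hφa : φ a = φ g := by
      rw [AddMonoidHom.mem_ker, map_sub, sub_eq_zero] at hga
      exact hga.symm
    exact ⟨a, mem_filter.mpr ⟨ha, hφa ▸ (mem_filter.mp hv).2⟩, hφa⟩

end IsTilingPairSub

theorem card_filter_symp_eq_zero {p : ℕ} [Fact p.Prime] {w : G p} (hw : w ≠ 0) :
    #(univ.filter (fun v : G p => symp v w = 0)) = p := by
  suffices h : univ.filter (fun v : G p => symp v w = 0) = univ.image (· • w) by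
    rw [h, card_image_of_injective _ (smul_left_injective (ZMod p) hw), card_univ, ZMod.card]
  ext v
  simp only [mem_filter, mem_univ, true_and, mem_image, symp, sub_eq_zero]
  constructor
  · intro h
    by_cases hw₁ : w.1 = 0
    · have hw₂ : w.2 ≠ 0 := fun hw₂ => hw (Prod.ext hw₁ hw₂)
      have hv₁ : v.1 = 0 := by simpa [hw₁, hw₂] using h
      exact ⟨v.2 / w.2, Prod.ext (by simp [hw₁, hv₁]) (by simp [hw₂])⟩
    · refine ⟨v.1 / w.1, Prod.ext (by simp [hw₁]) ?_⟩
      simp only [Prod.smul_snd, smul_eq_mul]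
      field_simp
      rw [h, mul_comm]
  · rintro ⟨t, rfl⟩
    simp only [Prod.smul_fst, Prod.smul_snd, smul_eq_mul]
    ring

theorem card_filter_dvd_eq_sum {ι : Type*} (s : Finset ι) (e : ι → ℕ) {p : ℕ} (hp : 0 < p)
    (he : ∀ i ∈ s, e i < p * p) :
    #(s.filter (fun i => p ∣ e i)) = ∑ j ∈ range p, #(s.filter (fun i => e i = j * p)) := by
  rw [card_eq_sum_card_fiberwise (f := fun i => e i / p) (t := range p)]
  · refine sum_congr rfl fun j _ => congrArg card ?_
    ext i
    simp only [mem_filter]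
    constructor
    · rintro ⟨⟨hi, hdvd⟩, rfl⟩
      exact ⟨hi, (Nat.div_mul_cancel hdvd).symm⟩
    · rintro ⟨hi, hij⟩
      exact ⟨⟨hi, hij ▸ dvd_mul_left p j⟩, by rw [hij, Nat.mul_div_cancel _ hp]⟩
  · intro i hi
    exact mem_range.mpr ((Nat.div_lt_iff_lt_mul hp).mpr (he i (mem_filter.mp hi).1))

theorem sF_eq_aeval {n : ℕ} (A : Finset (G n)) (ξ : G n) :
    sF A ξ = aeval (exp (2 * Real.pi * I / n)) (∑ a ∈ A, (X : ℚ[X]) ^ (symp a ξ).val) := by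
  simp only [sF, map_sum, map_pow, aeval_X, ← Complex.exp_nat_mul]
  congr 1 with a
  ring_nf

theorem sF_zero {n : ℕ} (A : Finset (G n)) : sF A 0 = #A := by
  simp [sF, symp]

theorem card_filter_symp_val_eq_mul_of_sF_eq_zero {p : ℕ} [Fact p.Prime] {A : Finset (G (p ^ 2))}
    {a : G (p ^ 2)} (hsF : sF A a = 0) {j : ℕ} (hj : j < p) :
    #(A.filter (fun x => (symp x a).val = j * p)) = #(A.filter (fun x => (symp x a).val = 0)) := by
  have hp : p ^ 2 ≠ 0 := pow_ne_zero _ (Fact.out : p.Prime).ne_zero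
  have hdeg : (∑ x ∈ A, (X : ℚ[X]) ^ (symp x a).val).natDegree < p ^ (1 + 1) :=
    (natDegree_sum_X_pow_le fun x _ => Nat.le_sub_one_of_lt (ZMod.val_lt _)).trans_lt
      (Nat.sub_one_lt hp)
  have := coeff_mul_prime_pow_eq_coeff_zero_of_aeval_eq_zero (Complex.isPrimitiveRoot_exp _ hp)
    hdeg ((sF_eq_aeval A a).symm.trans hsF) hj
  rwa [coeff_sum_X_pow, coeff_sum_X_pow, pow_one, Nat.cast_inj] at this

theorem IsTilingPairSub.card_filter_dvd_symp_val {p : ℕ} [Fact p.Prime] {A : Finset (G (p ^ 2))}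
    (hA : IsTilingPairSub A (Hp p)) {a : G (p ^ 2)} (ha : reduceMod p a ≠ 0) :
    #(A.filter (fun x => p ∣ (symp x a).val)) = p := by
  simp_rw [← ZMod.castHom_eq_zero_iff_dvd_val (dvd_pow_self p two_ne_zero), ← symp_reduceMod]
  rw [hA.card_filter_comp _ (reduceMod_surjective p) (ker_reduceMod p)
    (fun v => symp v (reduceMod p a) = 0)]
  exact card_filter_symp_eq_zero ha

/-- If `A` complements the non-cyclic Lagrangian of `(Z/p²Z)²` and `0 ∈ A`, then `A` is
disjoint from the zero set of its own symplectic Fourier transform. -/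
theorem stmt13 (p : ℕ) (hp : p.Prime) (A : Finset (G (p ^ 2)))
    (hA : IsTilingPairSub A (Hp p)) (h0 : (0 : G (p ^ 2)) ∈ A) :
    ∀ a ∈ A, sF A a ≠ 0 := by
  have : Fact p.Prime := ⟨hp⟩
  intro a ha hsF
  rcases eq_or_ne a 0 with rfl | ha0
  · rw [sF_zero, Nat.cast_eq_zero, card_eq_zero] at hsF
    exact notMem_empty _ (hsF ▸ h0)
  have hred : reduceMod p a ≠ 0 := fun h =>
    ha0 (hA.eq_of_sub_mem h0 ha (by rw [← ker_reduceMod, sub_zero]; exact h)).symm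
  have hline := hA.card_filter_dvd_symp_val hred
  rw [card_filter_dvd_eq_sum A _ hp.pos fun x _ => sq p ▸ ZMod.val_lt _,
    sum_congr rfl fun j hj => card_filter_symp_val_eq_mul_of_sF_eq_zero hsF (mem_range.mp hj),
    sum_const, card_range, smul_eq_mul] at hline
  have htwo : 1 < #(A.filter (fun x => (symp x a).val = 0)) :=
    one_lt_card.mpr ⟨0, by simp [symp, h0], a, by simp [symp, ha, mul_comm], ha0.symm⟩
  nlinarith [hp.pos]
end

section
/- Let p be prime and let H be the non-cyclic Lagrangian {(x,y) : px = py = 0} of (Z/p²Z)². If A ⊆ (Z/p²Z)² is a tiling complement of H, then ΔA ∩ Z(1̂_A^{sym}) = ∅: for all distinct a, a' ∈ A, ∑_{a''∈A} e^{2πi⟨a'', a−a'⟩_s/p²} ≠ 0. -/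
open Complex

open Polynomial Finset in
/-- If an integer combination of the powers `ζ^(t.val)` of a primitive `p²`-th root of unity
vanishes, then the coefficient function is constant on residue classes mod `p`. -/
lemma key_const (p : ℕ) (hp : p.Prime) [NeZero p] (g : ZMod (p ^ 2) → ℤ)
    (h0 : ∑ t : ZMod (p ^ 2), (g t : ℂ) *
        Complex.exp (2 * Real.pi * Complex.I / ((p ^ 2 : ℕ) : ℂ)) ^ t.val = 0) :
    ∀ t t' : ZMod (p ^ 2), t.val % p = t'.val % p → g t = g t' := by
  have hn : 0 < p ^ 2 := pow_pos hp.pos 2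
  set ζ := Complex.exp (2 * Real.pi * Complex.I / ((p ^ 2 : ℕ) : ℂ)) with hζdef
  have hζ : IsPrimitiveRoot ζ (p ^ 2) := Complex.isPrimitiveRoot_exp _ hn.ne'
  set Q : ℚ[X] := ∑ t : ZMod (p ^ 2), Polynomial.C ((g t : ℚ)) * Polynomial.X ^ t.val with hQdef
  have hcoeff : ∀ t : ZMod (p ^ 2), Q.coeff t.val = (g t : ℚ) := by
    intro t
    rw [hQdef, Polynomial.finset_sum_coeff]
    rw [Finset.sum_eq_single t]
    · simp [coeff_X_pow]
    · intro t' _ hne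
      have h2 : t.val ≠ t'.val := fun h => hne (ZMod.val_injective _ h.symm)
      simp [coeff_X_pow, h2]
    · intro h; exact absurd (Finset.mem_univ t) h
  have hdeg : Q.natDegree ≤ p ^ 2 - 1 := by
    apply Polynomial.natDegree_sum_le_of_forall_le
    intro t _
    refine le_trans (natDegree_C_mul_le _ _) ?_
    rw [natDegree_X_pow]
    exact Nat.le_sub_one_of_lt (ZMod.val_lt t)
  have hev : Polynomial.aeval ζ Q = 0 := by
    rw [hQdef, map_sum, ← h0]
    refine Finset.sum_congr rfl fun t _ => ?_
    rw [map_mul, Polynomial.aeval_C, map_pow, Polynomial.aeval_X, eq_ratCast]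
    push_cast
    ring
  have hdvd : Polynomial.cyclotomic (p ^ 2) ℚ ∣ Q := by
    rw [cyclotomic_eq_minpoly_rat hζ hn]
    exact minpoly.dvd ℚ ζ hev
  obtain ⟨R, hQR⟩ := hdvd
  by_cases hR0 : R = 0
  · intro t t' _
    have h1 : (g t : ℚ) = 0 := by rw [← hcoeff t, hQR, hR0, mul_zero, coeff_zero]
    have h2 : (g t' : ℚ) = 0 := by rw [← hcoeff t', hQR, hR0, mul_zero, coeff_zero]
    exact_mod_cast h1.trans h2.symm
  have hcyc : Polynomial.cyclotomic (p ^ 2) ℚ = ∑ i ∈ Finset.range p, (X ^ p) ^ i := by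
    have := cyclotomic_prime_pow_eq_geom_sum (R := ℚ) (n := 1) hp
    simpa using this
  have hcycne : Polynomial.cyclotomic (p ^ 2) ℚ ≠ 0 := cyclotomic_ne_zero _ ℚ
  have hdegc : (Polynomial.cyclotomic (p ^ 2) ℚ).natDegree = p * (p - 1) := by
    rw [natDegree_cyclotomic, Nat.totient_prime_pow hp (by norm_num)]
    ring_nf
  have hdegQ : Q.natDegree = p * (p - 1) + R.natDegree := by
    rw [hQR, Polynomial.natDegree_mul hcycne hR0, hdegc]
  have hdegR : R.natDegree ≤ p - 1 := by
    by_contra hcon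
    push_neg at hcon
    have h1 : p ≤ R.natDegree := by omega
    have h2 : p * (p - 1) + p = p * p := by
      have h : p - 1 + 1 = p := Nat.succ_pred_eq_of_pos hp.pos
      calc p * (p - 1) + p = p * ((p - 1) + 1) := by ring
        _ = p * p := by rw [h]
    have h3 : p * p = p ^ 2 := (sq p).symm
    omega
  have hcR : ∀ t : ZMod (p ^ 2), Q.coeff t.val = R.coeff (t.val % p) := by
    intro t
    have hval : t.val < p ^ 2 := ZMod.val_lt t
    obtain ⟨i, r, hr, hi, ht⟩ : ∃ i r, r < p ∧ i < p ∧ t.val = p * i + r := by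
      refine ⟨t.val / p, t.val % p, Nat.mod_lt _ hp.pos, ?_, (Nat.div_add_mod t.val p).symm⟩
      apply Nat.div_lt_of_lt_mul
      calc t.val < p ^ 2 := hval
        _ = p * p := sq p
    have hmod : t.val % p = r := by rw [ht, Nat.mul_add_mod, Nat.mod_eq_of_lt hr]
    rw [hmod, hQR, hcyc, Finset.sum_mul, Polynomial.finset_sum_coeff]
    rw [Finset.sum_eq_single i]
    · rw [← pow_mul, mul_comm (X ^ (p * i)) R, coeff_mul_X_pow',
        if_pos (ht ▸ Nat.le_add_right _ _), ht, Nat.add_sub_cancel_left]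
    · intro k hk hne
      rw [← pow_mul, mul_comm (X ^ (p * k)) R, coeff_mul_X_pow']
      rcases lt_or_gt_of_ne hne with h | h
      · have hpk : p * k + p ≤ p * i := by
          calc p * k + p = p * (k + 1) := by ring
            _ ≤ p * i := Nat.mul_le_mul_left p h
        rw [if_pos (by omega)]
        apply Polynomial.coeff_eq_zero_of_natDegree_lt
        omega
      · have hpk : p * i + p ≤ p * k := by
          calc p * i + p = p * (i + 1) := by ring
            _ ≤ p * k := Nat.mul_le_mul_left p h
        rw [if_neg (by omega)]
    · intro h
      exact absurd (Finset.mem_range.mpr hi) h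
  intro t t' hmod
  have : (g t : ℚ) = (g t' : ℚ) := by
    rw [← hcoeff t, ← hcoeff t', hcR t, hcR t', hmod]
  exact_mod_cast this

open Finset in
/-- A fiber of the mod-`p` symplectic form on a set on which mod-`p` reduction is
injective has at most `p` elements. -/
lemma count_le (p : ℕ) (hp : p.Prime) (A : Finset (G (p ^ 2)))
    (hinj : ∀ x ∈ A, ∀ y ∈ A,
      ((x.1.val : ZMod p) = (y.1.val : ZMod p)) → ((x.2.val : ZMod p) = (y.2.val : ZMod p)) → x = y)
    (ξ : G (p ^ 2)) (hξ : ¬(((ξ.1.val : ZMod p)) = 0 ∧ ((ξ.2.val : ZMod p)) = 0)) (c : ZMod p) :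
    (A.filter (fun x => ((symp x ξ).val : ZMod p) = c)).card ≤ p := by
  haveI : Fact p.Prime := ⟨hp⟩
  haveI : NeZero (p ^ 2) := ⟨pow_ne_zero 2 hp.ne_zero⟩
  set f := ZMod.castHom (dvd_pow_self p two_ne_zero) (ZMod p) with hf'
  have hf : ∀ x : ZMod (p ^ 2), ((x.val : ZMod p)) = f x := by
    intro x; rw [ZMod.natCast_val, ZMod.castHom_apply]
  have hs : ∀ x : G (p ^ 2), ((symp x ξ).val : ZMod p)
      = (x.1.val : ZMod p) * (ξ.2.val : ZMod p) - (x.2.val : ZMod p) * (ξ.1.val : ZMod p) := by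
    intro x
    simp only [hf, symp, map_sub, map_mul]
  have hcard : (Finset.univ : Finset (ZMod p)).card = p := by
    rw [Finset.card_univ, ZMod.card]
  by_cases h1 : ((ξ.1.val : ZMod p)) = 0
  · have h2 : ((ξ.2.val : ZMod p)) ≠ 0 := fun h => hξ ⟨h1, h⟩
    refine le_trans (Finset.card_le_card_of_injOn (fun x => ((x.2.val : ZMod p)))
      (fun _ _ => Finset.mem_univ _) ?_) hcard.le
    intro x hx y hy hxy
    simp only [Finset.coe_filter, Set.mem_setOf_eq] at hx hy
    have ex : (x.1.val : ZMod p) * (ξ.2.val : ZMod p) - (x.2.val : ZMod p) * (ξ.1.val : ZMod p)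
        = (y.1.val : ZMod p) * (ξ.2.val : ZMod p) - (y.2.val : ZMod p) * (ξ.1.val : ZMod p) := by
      rw [← hs, ← hs, hx.2, hy.2]
    rw [h1, mul_zero, mul_zero, sub_zero, sub_zero] at ex
    exact hinj x hx.1 y hy.1 (mul_right_cancel₀ h2 ex) hxy
  · refine le_trans (Finset.card_le_card_of_injOn (fun x => ((x.1.val : ZMod p)))
      (fun _ _ => Finset.mem_univ _) ?_) hcard.le
    intro x hx y hy hxy
    simp only [Finset.coe_filter, Set.mem_setOf_eq] at hx hy
    have ex : (x.1.val : ZMod p) * (ξ.2.val : ZMod p) - (x.2.val : ZMod p) * (ξ.1.val : ZMod p)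
        = (y.1.val : ZMod p) * (ξ.2.val : ZMod p) - (y.2.val : ZMod p) * (ξ.1.val : ZMod p) := by
      rw [← hs, ← hs, hx.2, hy.2]
    have hxy' : (x.1.val : ZMod p) = (y.1.val : ZMod p) := hxy
    rw [hxy', sub_right_inj] at ex
    exact hinj x hx.1 y hy.1 hxy' (mul_right_cancel₀ h1 ex)

open Finset in
/-- If `A` complements the non-cyclic Lagrangian of `(Z/p²Z)²`, then `ΔA` is
disjoint from the zero set of the symplectic Fourier transform of `A`. -/
theorem stmt14 (p : ℕ) (hp : p.Prime) (A : Finset (G (p ^ 2)))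
    (hA : IsTilingPairSub A (Hp p)) :
    ∀ a ∈ A, ∀ a' ∈ A, a ≠ a' → sF A (a - a') ≠ 0 := by
  intro a ha a' ha' hne hzero
  haveI : NeZero p := ⟨hp.ne_zero⟩
  haveI : NeZero (p ^ 2) := ⟨pow_ne_zero 2 hp.ne_zero⟩
  classical
  -- component characterization of `Hp`
  have hcomp : ∀ x : ZMod (p ^ 2), (p : ZMod (p ^ 2)) * x = 0 ↔ ((x.val : ZMod p)) = 0 := by
    intro x
    have hx : ((x.val : ℕ) : ZMod (p ^ 2)) = x := by rw [ZMod.natCast_val, ZMod.cast_id]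
    have l1 : (p : ZMod (p ^ 2)) * x = ((p * x.val : ℕ) : ZMod (p ^ 2)) := by
      rw [Nat.cast_mul, hx]
    have key : ∀ m : ℕ, (p ^ 2 ∣ p * m ↔ p ∣ m) := by
      intro m
      rw [pow_two]
      exact Nat.mul_dvd_mul_iff_left hp.pos
    rw [l1, ZMod.natCast_eq_zero_iff, ZMod.natCast_eq_zero_iff]
    exact key x.val
  have hHp : ∀ g : G (p ^ 2), g ∈ Hp p ↔
      ((g.1.val : ZMod p)) = 0 ∧ ((g.2.val : ZMod p)) = 0 := by
    intro g
    have e1 : g ∈ Hp p ↔ p • g = 0 := Iff.rfl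
    have e2 : (p • g = 0) ↔ (p • g.1 = 0 ∧ p • g.2 = 0) := by
      rw [Prod.ext_iff]; simp
    rw [e1, e2, nsmul_eq_mul, nsmul_eq_mul, hcomp, hcomp]
  have keyinj : ∀ x ∈ A, ∀ y ∈ A, x - y ∈ Hp p → x = y := by
    intro x hx y hy hmem
    obtain ⟨q, -, huniq⟩ := hA x
    have h1 : ((x, (0 : G (p ^ 2))) : G (p ^ 2) × G (p ^ 2)) = q :=
      huniq _ ⟨⟨hx, (Hp p).zero_mem⟩, add_zero x⟩
    have h2 : ((y, x - y) : G (p ^ 2) × G (p ^ 2)) = q :=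
      huniq _ ⟨⟨hy, hmem⟩, by ring⟩
    exact (Prod.ext_iff.mp (h1.trans h2.symm)).1
  set ξ : G (p ^ 2) := a - a' with hξdef
  have hξH : ξ ∉ Hp p := fun h => hne (keyinj a ha a' ha' h)
  have hξne : ¬(((ξ.1.val : ZMod p)) = 0 ∧ ((ξ.2.val : ZMod p)) = 0) :=
    fun h => hξH ((hHp ξ).mpr h)
  have hinj : ∀ x ∈ A, ∀ y ∈ A,
      ((x.1.val : ZMod p) = (y.1.val : ZMod p)) →
      ((x.2.val : ZMod p) = (y.2.val : ZMod p)) → x = y := by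
    have hf : ∀ x : ZMod (p ^ 2), ((x.val : ZMod p))
        = ZMod.castHom (dvd_pow_self p two_ne_zero) (ZMod p) x := by
      intro x; rw [ZMod.natCast_val, ZMod.castHom_apply]
    intro x hx y hy e1 e2
    apply keyinj x hx y hy
    rw [hHp]
    constructor
    · show (((x.1 - y.1).val : ZMod p)) = 0
      rw [hf, map_sub, ← hf, ← hf, e1, sub_self]
    · show (((x.2 - y.2).val : ZMod p)) = 0
      rw [hf, map_sub, ← hf, ← hf, e2, sub_self]
  -- the multiplicity function
  set N : ZMod (p ^ 2) → ℕ := fun t => (A.filter (fun x => symp x ξ = t)).card with hN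
  set ζ := Complex.exp (2 * Real.pi * Complex.I / ((p ^ 2 : ℕ) : ℂ)) with hζdef
  have hterm : ∀ v : ℕ,
      Complex.exp (2 * Real.pi * Complex.I * (v : ℂ) / ((p ^ 2 : ℕ) : ℂ)) = ζ ^ v := by
    intro v
    rw [hζdef, ← Complex.exp_nat_mul]
    congr 1
    ring
  have key0 : ∑ t : ZMod (p ^ 2), ((N t : ℤ) : ℂ) * ζ ^ t.val = 0 := by
    have e1 : sF A ξ = ∑ x ∈ A, ζ ^ (symp x ξ).val := by
      rw [sF]
      exact Finset.sum_congr rfl fun x _ => hterm _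
    have e2 : ∑ x ∈ A, ζ ^ (symp x ξ).val
        = ∑ t : ZMod (p ^ 2), ((N t : ℤ) : ℂ) * ζ ^ t.val := by
      rw [← Finset.sum_fiberwise' A (fun x => symp x ξ) (fun t => ζ ^ t.val)]
      refine Finset.sum_congr rfl fun t _ => ?_
      rw [Finset.sum_const, nsmul_eq_mul]
      push_cast
      ring
    rw [e1, e2] at hzero
    exact hzero
  rw [hζdef] at key0
  have hconst := key_const p hp (fun t => (N t : ℤ)) key0
  -- t₀ := symp a ξ has multiplicity at least two
  have ht0' : symp a' ξ = symp a ξ := by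
    simp only [symp, hξdef, Prod.fst_sub, Prod.snd_sub]
    ring
  have hN2 : 2 ≤ N (symp a ξ) := by
    have hsub : ({a, a'} : Finset (G (p ^ 2))) ⊆ A.filter (fun x => symp x ξ = symp a ξ) := by
      intro x hx
      rcases Finset.mem_insert.mp hx with h | h
      · subst h; exact Finset.mem_filter.mpr ⟨ha, rfl⟩
      · rw [Finset.mem_singleton] at h
        subst h; exact Finset.mem_filter.mpr ⟨ha', ht0'⟩
    calc 2 = ({a, a'} : Finset (G (p ^ 2))).card := (Finset.card_pair hne).symm
      _ ≤ _ := Finset.card_le_card hsub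
  -- the translates t₀ + p*k
  set T : Finset (ZMod (p ^ 2)) :=
    (Finset.range p).image (fun k => symp a ξ + ((p * k : ℕ) : ZMod (p ^ 2))) with hT
  have hmul_lt : ∀ k < p, p * k < p ^ 2 := by
    intro k hk
    calc p * k < p * p := mul_lt_mul_of_pos_left hk hp.pos
      _ = p ^ 2 := (sq p).symm
  have hTmod : ∀ t ∈ T, t.val % p = (symp a ξ).val % p := by
    intro t ht
    obtain ⟨k, hk, rfl⟩ := Finset.mem_image.mp ht
    rw [Finset.mem_range] at hk
    rw [ZMod.val_add, ZMod.val_cast_of_lt (hmul_lt k hk),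
      Nat.mod_mod_of_dvd _ (dvd_pow_self p two_ne_zero), mul_comm p k,
      Nat.add_mul_mod_self_right]
  have hTcard : T.card = p := by
    rw [hT, Finset.card_image_of_injOn, Finset.card_range]
    intro k hk k' hk' he
    rw [Finset.mem_coe, Finset.mem_range] at hk hk'
    simp only at he
    have h3 := add_left_cancel he
    have v := congrArg ZMod.val h3
    rw [ZMod.val_cast_of_lt (hmul_lt k hk), ZMod.val_cast_of_lt (hmul_lt k' hk')] at v
    exact Nat.eq_of_mul_eq_mul_left hp.pos v
  have hNT : ∀ t ∈ T, N t = N (symp a ξ) := by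
    intro t ht
    have h2 : (N t : ℤ) = (N (symp a ξ) : ℤ) := hconst t (symp a ξ) (hTmod t ht)
    exact_mod_cast h2
  -- upper bound via disjoint fibers
  set c0 : ZMod p := (((symp a ξ).val : ZMod p)) with hc0
  have hle : ∑ t ∈ T, N t ≤ (A.filter (fun x => ((symp x ξ).val : ZMod p) = c0)).card := by
    have hdisj : ∀ t ∈ T, ∀ t' ∈ T, t ≠ t' →
        Disjoint (A.filter (fun x => symp x ξ = t)) (A.filter (fun x => symp x ξ = t')) := by
      intro t _ t' _ hne'
      rw [Finset.disjoint_left]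
      intro x hx hx'
      exact hne' ((Finset.mem_filter.mp hx).2.symm.trans (Finset.mem_filter.mp hx').2)
    calc ∑ t ∈ T, N t
        = (T.biUnion (fun t => A.filter (fun x => symp x ξ = t))).card :=
          (Finset.card_biUnion hdisj).symm
      _ ≤ _ := by
          apply Finset.card_le_card
          intro x hx
          obtain ⟨t, htT, hxt⟩ := Finset.mem_biUnion.mp hx
          obtain ⟨hxA, hxe⟩ := Finset.mem_filter.mp hxt
          refine Finset.mem_filter.mpr ⟨hxA, ?_⟩
          rw [hxe, hc0, ← ZMod.natCast_mod t.val p, hTmod t htT, ZMod.natCast_mod]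
  have hub := count_le p hp A hinj ξ hξne c0
  have hlow : ∑ t ∈ T, N t = p * N (symp a ξ) := by
    rw [Finset.sum_congr rfl hNT, Finset.sum_const, hTcard, smul_eq_mul]
  have hfin : p * 2 ≤ p := by
    calc p * 2 ≤ p * N (symp a ξ) := Nat.mul_le_mul_left p hN2
      _ = ∑ t ∈ T, N t := hlow.symm
      _ ≤ (A.filter (fun x => ((symp x ξ).val : ZMod p) = c0)).card := hle
      _ ≤ p := hub
  have := hp.pos
  omega
end
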